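/- Let m1, m2 be positive integers with m2 even, and for i ∈ I(m) define the Lagrange function L_i(θ,φ) = (1/(m1m2)) Σ_{γ ∈ Γ(m)} conj(χ_γ(i))/‖χ_γ‖² · X_γ(θ,φ). Then L_j(i1π/m1, i2π/m2) = δ_{ij} for all i, j ∈ I(m), and the functions L_i, i ∈ I(m), form a basis of span{X_γ : γ ∈ Γ(m)}. -/

import Mathlib

/-!
Extend the grid I(m) to the checkerboard {k ∈ (ℤ/2m₁) × (ℤ/2m₂) : k₁ + k₂ even}. Each χ_γ is a
combination of four plane waves k ↦ ζ^(u k₁) ζ'^(v k₂) (ζ, ζ' primitive roots of unity of orders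
2m₁, 2m₂), and is invariant under k ↦ (-k₁, k₂ + m₂), for which I(m) is a fundamental domain.
A plane wave sums to zero over the checkerboard unless (u, v) lies in the dual lattice
{(m₁a, m₂b) : a + b even}. For γ, γ' ∈ Γ(m) the frequencies (γ₁ ∓ γ'₁, γ₂ - γ'₂) meet it only when
γ = γ' (and, for the + sign, γ₁ ∈ {0, m₁}), which is the discrete orthogonality
∑_{i ∈ I(m)} χ_γ(i) conj χ_γ'(i) = m₁m₂ ‖χ_γ‖² δ_γγ'. A lattice-point count gives
|Γ(m)| = |I(m)| = m₁m₂, so the matrix (χ_γ(i)) is square and orthogonality also holds in the dual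
form, which is L_j(i₁π/m₁, i₂π/m₂) = δ_ij. Evaluation at the nodes gives linear independence, and
orthogonality gives X_γ = ∑_i χ_γ(i) L_i.
-/

open Real Complex

/-- The index set I(m) as a finset. -/
def indexSet (m1 m2 : ℕ) : Finset (ℕ × ℕ) :=
  (Finset.range (m1 + 1) ×ˢ Finset.range (2 * m2)).filter
    (fun i => ((i.1 = 0 ∨ i.1 = m1) → i.2 < m2) ∧ Even (i.1 + i.2))

/-- The spectral index set Γ(m), with denominators cleared. -/
noncomputable def GammaSet (m1 m2 : ℕ) : Finset (ℤ × ℤ) :=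
  ((Finset.Icc (0 : ℤ) m1) ×ˢ (Finset.Icc (-(m2 : ℤ)) m2)).filter
    (fun γ => ((1 ≤ γ.1 ∧ (m2 : ℤ) * γ.1 + (m1 : ℤ) * |γ.2| ≤ m1 * m2) ∨
        (γ.1 = 0 ∧ Even γ.2 ∧ |γ.2| < (m2 : ℤ))) ∧
      ¬((m2 : ℤ) * γ.1 + (m1 : ℤ) * γ.2 = m1 * m2 ∧ γ.2 ≠ 0))

/-- The discretized parity-modified Fourier basis functions χ_γ. -/
noncomputable def chi (m1 m2 : ℕ) (γ : ℤ × ℤ) (i : ℕ × ℕ) : ℂ :=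
  if Even γ.2 then
    (Real.cos ((γ.1 : ℝ) * i.1 * π / m1) : ℂ) *
      Complex.exp (Complex.I * γ.2 * i.2 * (π : ℂ) / m2)
  else
    Complex.I * (Real.sin ((γ.1 : ℝ) * i.1 * π / m1) : ℂ) *
      Complex.exp (Complex.I * γ.2 * i.2 * (π : ℂ) / m2)

/-- The parity-modified double Fourier basis functions X_γ. -/
noncomputable def Xbasis (γ : ℤ × ℤ) (θ φ : ℝ) : ℂ :=
  if Even γ.2 then
    (Real.cos (γ.1 * θ) : ℂ) * Complex.exp (Complex.I * γ.2 * φ)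
  else
    Complex.I * (Real.sin (γ.1 * θ) : ℂ) * Complex.exp (Complex.I * γ.2 * φ)

/-- The Lagrange functions L_i. -/
noncomputable def lagrange (m1 m2 : ℕ) (i : ℕ × ℕ) (θ φ : ℝ) : ℂ :=
  (1 / (m1 * m2 : ℂ)) * ∑ γ ∈ GammaSet m1 m2,
    (starRingEnd ℂ) (chi m1 m2 γ i) /
      (if γ.1 = 0 ∨ γ.1 = (m1 : ℤ) then 1 else 1 / 2) * Xbasis γ θ φ

open Finset

theorem IsPrimitiveRoot.sum_zpow_mul {K : Type*} [Field K] {ζ : K} {n : ℕ}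
    (hζ : IsPrimitiveRoot ζ n) (t : ℤ) :
    ∑ k ∈ range n, ζ ^ (t * k) = if (n : ℤ) ∣ t then (n : K) else 0 := by
  have hpow : ∀ k : ℕ, ζ ^ (t * k) = (ζ ^ t) ^ k := fun k => by rw [zpow_mul, zpow_natCast]
  simp_rw [hpow]
  split_ifs with h
  · simp [(hζ.zpow_eq_one_iff_dvd t).2 h]
  · have hne : ζ ^ t ≠ 1 := fun h1 => h ((hζ.zpow_eq_one_iff_dvd t).1 h1)
    rw [geom_sum_eq hne, ← zpow_natCast, ← zpow_mul, mul_comm,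
      (hζ.zpow_eq_one_iff_dvd _).2 (dvd_mul_right _ _), sub_self, zero_div]

lemma Int.ediv_add_ediv_of_add_add_one_eq {m n x y : ℤ} (hm : 0 < m) (h : x + y + 1 = m * n) :
    x / m + y / m = n - 1 := by
  have hx := Int.mul_ediv_add_emod x m
  have hy := Int.mul_ediv_add_emod y m
  have hx0 := Int.emod_nonneg x hm.ne'
  have hy0 := Int.emod_nonneg y hm.ne'
  have hxm := Int.emod_lt_of_pos x hm
  have hym := Int.emod_lt_of_pos y hm
  have hk : m * (n - x / m - y / m) = x % m + y % m + 1 := by linear_combination -h - hx - hy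
  have h1 : 0 < n - x / m - y / m := by nlinarith
  have h2 : n - x / m - y / m < 2 := by nlinarith
  omega

lemma Finset.card_filter_fst_eq {α β : Type*} [DecidableEq α] (s : Finset (α × β)) (a : α)
    (t : Finset β) (h : ∀ b, b ∈ t ↔ (a, b) ∈ s) : #(s.filter (·.1 = a)) = #t := by
  refine card_nbij' Prod.snd (Prod.mk a) ?_ ?_ ?_ ?_
  · rintro ⟨a', b⟩ hab
    simp only [mem_coe, mem_filter] at hab
    obtain ⟨hab, rfl⟩ := hab
    exact (h b).2 hab
  · intro b hb
    simp only [mem_coe, mem_filter]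
    simpa using (h b).1 hb
  · rintro ⟨a', b⟩ hab
    simp only [mem_coe, mem_filter] at hab
    obtain ⟨-, rfl⟩ := hab
    rfl
  · intro b _
    rfl

noncomputable def zeta (m : ℕ) : ℂ := exp (π * I / m)

lemma zeta_ne_zero (m : ℕ) : zeta m ≠ 0 := Complex.exp_ne_zero _

lemma zeta_zpow (m : ℕ) (t : ℤ) : zeta m ^ t = exp (t * π * I / m) := by
  rw [zeta, ← Complex.exp_int_mul]; ring_nf

lemma isPrimitiveRoot_zeta {m : ℕ} (hm : m ≠ 0) : IsPrimitiveRoot (zeta m) (2 * m) := by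
  convert Complex.isPrimitiveRoot_exp (2 * m) (by positivity) using 2
  rw [zeta]; push_cast; field_simp

lemma zeta_zpow_congr {m : ℕ} (hm : m ≠ 0) {s t : ℤ} (h : s ≡ t [ZMOD 2 * m]) :
    zeta m ^ s = zeta m ^ t := by
  have h1 : zeta m ^ (s - t) = 1 := by
    rw [(isPrimitiveRoot_zeta hm).zpow_eq_one_iff_dvd]
    exact_mod_cast (Int.ModEq.dvd h.symm)
  rw [← sub_add_cancel s t, zpow_add₀ (zeta_ne_zero m), h1, one_mul]

lemma zeta_zpow_mul_self {m : ℕ} (hm : m ≠ 0) (t : ℤ) : zeta m ^ (m * t) = (-1) ^ t := by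
  rw [zpow_mul, zpow_natCast, zeta, ← Complex.exp_nat_mul, mul_div_cancel₀ _ (by exact_mod_cast hm),
    exp_pi_mul_I]

lemma conj_zeta_zpow (m : ℕ) (t : ℤ) : starRingEnd ℂ (zeta m ^ t) = zeta m ^ (-t) := by
  rw [zeta_zpow, zeta_zpow, ← exp_conj]
  congr 1
  simp [map_div₀]

noncomputable def planeWave (m1 m2 : ℕ) (u v : ℤ) (k : ℕ × ℕ) : ℂ :=
  zeta m1 ^ (u * k.1) * zeta m2 ^ (v * k.2)

lemma planeWave_mul (m1 m2 : ℕ) (u v u' v' : ℤ) (k : ℕ × ℕ) :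
    planeWave m1 m2 u v k * planeWave m1 m2 u' v' k = planeWave m1 m2 (u + u') (v + v') k := by
  simp only [planeWave, add_mul, zpow_add₀ (zeta_ne_zero _)]
  ring

lemma conj_planeWave (m1 m2 : ℕ) (u v : ℤ) (k : ℕ × ℕ) :
    starRingEnd ℂ (planeWave m1 m2 u v k) = planeWave m1 m2 (-u) (-v) k := by
  simp only [planeWave, map_mul, conj_zeta_zpow, neg_mul]

lemma chi_eq_planeWave (m1 m2 : ℕ) (γ : ℤ × ℤ) (i : ℕ × ℕ) :
    chi m1 m2 γ i =
      (planeWave m1 m2 γ.1 γ.2 i + (-1) ^ γ.2 * planeWave m1 m2 (-γ.1) γ.2 i) / 2 := by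
  unfold chi planeWave
  simp only [zeta_zpow]
  split_ifs with h
  · rw [h.neg_one_zpow, ofReal_cos, Complex.cos]
    push_cast
    ring_nf
  · rw [(Int.not_even_iff_odd.1 h).neg_one_zpow, ofReal_sin, Complex.sin]
    push_cast
    ring_nf
    simp only [Complex.exp_neg, I_sq]
    ring

lemma conj_chi (m1 m2 : ℕ) (γ : ℤ × ℤ) (i : ℕ × ℕ) :
    starRingEnd ℂ (chi m1 m2 γ i) =
      (planeWave m1 m2 (-γ.1) (-γ.2) i + (-1) ^ γ.2 * planeWave m1 m2 γ.1 (-γ.2) i) / 2 := by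
  rw [chi_eq_planeWave, map_div₀, map_add, map_mul, conj_planeWave, conj_planeWave, map_zpow₀,
    map_neg, map_one, map_ofNat, neg_neg]

def checkerboard (m1 m2 : ℕ) : Finset (ℕ × ℕ) :=
  (range (2 * m1) ×ˢ range (2 * m2)).filter fun k => Even (k.1 + k.2)

-- The dual lattice of `checkerboard`.
def Resonant (m1 m2 : ℕ) (u v : ℤ) : Prop :=
  ∃ a b : ℤ, u = m1 * a ∧ v = m2 * b ∧ Even (a + b)

lemma resonant_iff {m1 m2 : ℕ} {u v : ℤ} :
    Resonant m1 m2 u v ↔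
      (2 * m1 : ℤ) ∣ u ∧ (2 * m2 : ℤ) ∣ v ∨ (2 * m1 : ℤ) ∣ u + m1 ∧ (2 * m2 : ℤ) ∣ v + m2 := by
  constructor
  · rintro ⟨a, b, rfl, rfl, hab⟩
    rcases Int.even_or_odd a with ha | ha
    · obtain ⟨c, rfl⟩ := ha
      obtain ⟨d, rfl⟩ : Even b := (Int.even_add.1 hab).1 ⟨c, rfl⟩
      exact Or.inl ⟨⟨c, by ring⟩, ⟨d, by ring⟩⟩
    · obtain ⟨d, rfl⟩ : Odd b :=
        Int.not_even_iff_odd.1 fun hb => Int.not_even_iff_odd.2 ha ((Int.even_add.1 hab).2 hb)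
      obtain ⟨c, rfl⟩ := ha
      exact Or.inr ⟨⟨c + 1, by ring⟩, ⟨d + 1, by ring⟩⟩
  · rintro (⟨⟨c, hc⟩, ⟨d, hd⟩⟩ | ⟨⟨c, hc⟩, ⟨d, hd⟩⟩)
    · exact ⟨2 * c, 2 * d, by rw [hc]; ring, by rw [hd]; ring, ⟨c + d, by ring⟩⟩
    · refine ⟨2 * c - 1, 2 * d - 1, by linear_combination hc, by linear_combination hd,
        ⟨c + d - 1, by ring⟩⟩

lemma resonant_neg_iff {m1 m2 : ℕ} {u v : ℤ} : Resonant m1 m2 (-u) v ↔ Resonant m1 m2 u v := by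
  have key : ∀ u, Resonant m1 m2 (-u) v → Resonant m1 m2 u v := by
    rintro u ⟨p, q, hp, hq, hpq⟩
    exact ⟨-p, q, by linear_combination -hp, hq, by simpa [Int.even_add, even_neg] using hpq⟩
  exact ⟨key u, fun h => key (-u) (by rwa [neg_neg])⟩

lemma not_dvd_and_dvd_add_self {m : ℕ} (hm : m ≠ 0) (u : ℤ) :
    ¬((2 * m : ℤ) ∣ u ∧ (2 * m : ℤ) ∣ u + m) := by
  rintro ⟨hu, hum⟩
  have := Int.le_of_dvd (by omega) ((Int.dvd_add_right hu).1 hum)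
  omega

lemma sum_planeWave_box {m1 m2 : ℕ} (hm1 : m1 ≠ 0) (hm2 : m2 ≠ 0) (u v : ℤ) :
    ∑ k ∈ range (2 * m1) ×ˢ range (2 * m2), planeWave m1 m2 u v k =
      if (2 * m1 : ℤ) ∣ u ∧ (2 * m2 : ℤ) ∣ v then (4 * m1 * m2 : ℂ) else 0 := by
  simp only [sum_product, planeWave]
  rw [← sum_mul_sum]
  rw [(isPrimitiveRoot_zeta hm1).sum_zpow_mul, (isPrimitiveRoot_zeta hm2).sum_zpow_mul,
    ite_zero_mul_ite_zero]
  push_cast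
  ring_nf

lemma planeWave_self {m1 m2 : ℕ} (hm1 : m1 ≠ 0) (hm2 : m2 ≠ 0) (k : ℕ × ℕ) :
    planeWave m1 m2 m1 m2 k = (-1) ^ (k.1 + k.2) := by
  rw [planeWave, zeta_zpow_mul_self hm1, zeta_zpow_mul_self hm2, ← zpow_add₀ (by norm_num)]
  norm_cast

open scoped Classical in
lemma sum_checkerboard_planeWave {m1 m2 : ℕ} (hm1 : m1 ≠ 0) (hm2 : m2 ≠ 0) (u v : ℤ) :
    ∑ k ∈ checkerboard m1 m2, planeWave m1 m2 u v k =
      if Resonant m1 m2 u v then (2 * m1 * m2 : ℂ) else 0 := by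
  have hparity : ∀ k : ℕ × ℕ, (if Even (k.1 + k.2) then planeWave m1 m2 u v k else 0) =
      (planeWave m1 m2 u v k + planeWave m1 m2 (u + m1) (v + m2) k) / 2 := by
    intro k
    rw [← planeWave_mul, planeWave_self hm1 hm2]
    split_ifs with h
    · rw [h.neg_one_pow]; ring
    · rw [(Nat.not_even_iff_odd.1 h).neg_one_pow]; ring
  rw [checkerboard, sum_filter, sum_congr rfl fun k _ => hparity k, ← sum_div, sum_add_distrib,
    sum_planeWave_box hm1 hm2, sum_planeWave_box hm1 hm2, resonant_iff]
  have := not_dvd_and_dvd_add_self hm1 u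
  split_ifs <;> first | ring1 | tauto

-- The grid form of (θ, φ) ↦ (-θ, φ + π).
def reflect (m1 m2 : ℕ) (i : ℕ × ℕ) : ℕ × ℕ :=
  (if i.1 = 0 then 0 else 2 * m1 - i.1, if i.2 < m2 then i.2 + m2 else i.2 - m2)

section FundamentalDomain

variable {m1 m2 : ℕ}

lemma mem_indexSet_iff {i : ℕ × ℕ} :
    i ∈ indexSet m1 m2 ↔ i.1 ≤ m1 ∧ i.2 < 2 * m2 ∧
      ((i.1 = 0 ∨ i.1 = m1) → i.2 < m2) ∧ (i.1 + i.2) % 2 = 0 := by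
  simp [indexSet, Nat.even_iff, and_assoc]

lemma mem_checkerboard_iff {k : ℕ × ℕ} :
    k ∈ checkerboard m1 m2 ↔ k.1 < 2 * m1 ∧ k.2 < 2 * m2 ∧ (k.1 + k.2) % 2 = 0 := by
  simp [checkerboard, Nat.even_iff, and_assoc]

lemma reflect_reflect {k : ℕ × ℕ} (hk : k ∈ checkerboard m1 m2) :
    reflect m1 m2 (reflect m1 m2 k) = k := by
  rw [mem_checkerboard_iff] at hk
  simp only [reflect, Prod.ext_iff]
  split_ifs <;> omega

lemma reflect_mem_checkerboard (heven : Even m2) {k : ℕ × ℕ} (hk : k ∈ checkerboard m1 m2) :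
    reflect m1 m2 k ∈ checkerboard m1 m2 := by
  obtain ⟨h, rfl⟩ := heven
  rw [mem_checkerboard_iff] at hk ⊢
  simp only [reflect]
  split_ifs <;> omega

lemma reflect_mem_indexSet_iff (heven : Even m2) {k : ℕ × ℕ} (hk : k ∈ checkerboard m1 m2) :
    reflect m1 m2 k ∈ indexSet m1 m2 ↔ k ∉ indexSet m1 m2 := by
  obtain ⟨h, rfl⟩ := heven
  rw [mem_checkerboard_iff] at hk
  rw [mem_indexSet_iff, mem_indexSet_iff]
  simp only [reflect]
  split_ifs <;> omega

lemma indexSet_subset_checkerboard (hm1 : m1 ≠ 0) : indexSet m1 m2 ⊆ checkerboard m1 m2 := by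
  intro i hi
  rw [mem_indexSet_iff] at hi
  rw [mem_checkerboard_iff]
  omega

lemma sum_checkerboard_eq_sum_indexSet (hm1 : m1 ≠ 0) (heven : Even m2) (F : ℕ × ℕ → ℂ) :
    ∑ k ∈ checkerboard m1 m2, F k = ∑ i ∈ indexSet m1 m2, (F i + F (reflect m1 m2 i)) := by
  have hsub := indexSet_subset_checkerboard (m2 := m2) hm1
  have hcompl : ∑ k ∈ checkerboard m1 m2 \ indexSet m1 m2, F k =
      ∑ i ∈ indexSet m1 m2, F (reflect m1 m2 i) := by
    refine (sum_nbij' (reflect m1 m2) (reflect m1 m2) ?_ ?_ ?_ ?_ fun _ _ => rfl).symm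
    · intro i hi
      have hk := hsub hi
      rw [mem_sdiff]
      refine ⟨reflect_mem_checkerboard heven hk, ?_⟩
      rw [← reflect_mem_indexSet_iff heven (reflect_mem_checkerboard heven hk),
        reflect_reflect hk]
      exact hi
    · intro k hk
      rw [mem_sdiff] at hk
      exact (reflect_mem_indexSet_iff heven hk.1).2 hk.2
    · exact fun i hi => reflect_reflect (hsub hi)
    · exact fun k hk => reflect_reflect (mem_sdiff.1 hk).1
  rw [sum_add_distrib, ← hcompl, add_comm, sum_sdiff hsub]

lemma card_indexSet (hm1 : m1 ≠ 0) (hm2 : m2 ≠ 0) (heven : Even m2) :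
    #(indexSet m1 m2) = m1 * m2 := by
  have hcb := sum_checkerboard_planeWave hm1 hm2 0 0
  have hfold := sum_checkerboard_eq_sum_indexSet hm1 heven (planeWave m1 m2 0 0)
  simp only [planeWave, zero_mul, zpow_zero, mul_one, sum_const, nsmul_eq_mul] at hcb hfold
  rw [if_pos ⟨0, 0, by simp, by simp, Even.zero⟩, hfold] at hcb
  have h : (#(indexSet m1 m2) : ℂ) = m1 * m2 :=
    mul_left_cancel₀ two_ne_zero (by linear_combination hcb)
  exact_mod_cast h

lemma reflect_fst_modEq {i : ℕ × ℕ} (hi : i.1 ≤ 2 * m1) :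
    ((reflect m1 m2 i).1 : ℤ) ≡ -i.1 [ZMOD 2 * m1] := by
  refine Int.modEq_iff_dvd.2 ⟨if i.1 = 0 then 0 else -1, ?_⟩
  simp only [reflect]
  split_ifs <;> omega

lemma reflect_snd_modEq (i : ℕ × ℕ) :
    ((reflect m1 m2 i).2 : ℤ) ≡ i.2 + m2 [ZMOD 2 * m2] := by
  refine Int.modEq_iff_dvd.2 ⟨if i.2 < m2 then 0 else 1, ?_⟩
  simp only [reflect]
  split_ifs <;> omega

lemma planeWave_reflect (hm1 : m1 ≠ 0) (hm2 : m2 ≠ 0) (u v : ℤ) {i : ℕ × ℕ}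
    (hi : i.1 ≤ 2 * m1) :
    planeWave m1 m2 u v (reflect m1 m2 i) = (-1) ^ v * planeWave m1 m2 (-u) v i := by
  rw [planeWave, planeWave,
    zeta_zpow_congr hm1 ((reflect_fst_modEq hi).mul_left u),
    zeta_zpow_congr hm2 ((reflect_snd_modEq i).mul_left v), mul_add,
    zpow_add₀ (zeta_ne_zero _), mul_comm v (m2 : ℤ), zeta_zpow_mul_self hm2, neg_mul, mul_neg]
  ring

lemma chi_reflect (hm1 : m1 ≠ 0) (hm2 : m2 ≠ 0) (γ : ℤ × ℤ) {i : ℕ × ℕ}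
    (hi : i.1 ≤ 2 * m1) : chi m1 m2 γ (reflect m1 m2 i) = chi m1 m2 γ i := by
  rw [chi_eq_planeWave, chi_eq_planeWave, planeWave_reflect hm1 hm2 _ _ hi,
    planeWave_reflect hm1 hm2 _ _ hi, neg_neg, ← mul_assoc, ← zpow_add₀ (by norm_num),
    (Even.add_self _).neg_one_zpow]
  ring

end FundamentalDomain

section GammaSet

variable {m1 m2 : ℕ}

lemma mk_mem_GammaSet_iff (hm1 : 0 < m1) (hm2 : 0 < m2) {a b : ℤ} :
    (a, b) ∈ GammaSet m1 m2 ↔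
      (a = 0 ∧ Even b ∧ -(m2 : ℤ) < b ∧ b < m2) ∨ (a = m1 ∧ b = 0) ∨
        (0 < a ∧ a < m1 ∧ m2 * a - m1 * b ≤ m1 * m2 ∧ m2 * a + m1 * b < m1 * m2) := by
  have hm1' : (0 : ℤ) < m1 := by exact_mod_cast hm1
  have hm2' : (0 : ℤ) < m2 := by exact_mod_cast hm2
  simp only [GammaSet, mem_filter, mem_product, mem_Icc, abs_lt]
  constructor
  · rintro ⟨⟨⟨ha0, ham⟩, hb⟩, (⟨ha1, hab⟩ | ⟨rfl, hb2, hbm⟩), hexcl⟩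
    · rcases eq_or_lt_of_le ham with rfl | ham
      · have : |b| ≤ 0 := by nlinarith
        exact Or.inr (Or.inl ⟨rfl, abs_nonpos_iff.1 this⟩)
      · refine Or.inr (Or.inr ⟨ha1, ham, by nlinarith [le_abs_self b, neg_abs_le b], ?_⟩)
        refine lt_of_le_of_ne (by nlinarith [le_abs_self b, neg_abs_le b]) fun heq => ?_
        rcases eq_or_ne b 0 with rfl | hb0
        · nlinarith
        · exact hexcl ⟨heq, hb0⟩
    · exact Or.inl ⟨rfl, hb2, hbm⟩
  · rintro (⟨rfl, hb2, hbm⟩ | ⟨rfl, rfl⟩ | ⟨ha0, ham, hab1, hab2⟩)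
    · refine ⟨⟨⟨le_rfl, hm1'.le⟩, by omega, by omega⟩, Or.inr ⟨rfl, hb2, hbm⟩, ?_⟩
      rintro ⟨heq, -⟩
      nlinarith
    · refine ⟨⟨⟨hm1'.le, le_rfl⟩, by omega, by omega⟩, Or.inl ⟨hm1', by simp [mul_comm]⟩, ?_⟩
      simp
    · have hb1 : -(m2 : ℤ) < b := by nlinarith
      have hb2 : b < m2 := by nlinarith
      refine ⟨⟨⟨ha0.le, ham.le⟩, hb1.le, hb2.le⟩, Or.inl ⟨ha0, ?_⟩, fun ⟨heq, _⟩ => hab2.ne heq⟩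
      rcases abs_cases b with ⟨h, -⟩ | ⟨h, -⟩ <;> rw [h] <;> linarith

lemma bounds_of_mk_mem_GammaSet (hm1 : 0 < m1) (hm2 : 0 < m2) {a b : ℤ}
    (h : (a, b) ∈ GammaSet m1 m2) : 0 ≤ a ∧ a ≤ m1 ∧ -(m2 : ℤ) < b ∧ b < m2 := by
  have hm1' : (0 : ℤ) < m1 := by exact_mod_cast hm1
  rw [mk_mem_GammaSet_iff hm1 hm2] at h
  rcases h with h | h | ⟨ha0, ham, h1, h2⟩
  · omega
  · omega
  · exact ⟨ha0.le, ham.le, by nlinarith, by nlinarith⟩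

lemma even_snd_of_mem_GammaSet (hm1 : 0 < m1) (hm2 : 0 < m2) {γ : ℤ × ℤ}
    (hγ : γ ∈ GammaSet m1 m2) (hbd : γ.1 = 0 ∨ γ.1 = m1) : Even γ.2 := by
  obtain ⟨a, b⟩ := γ
  rw [mk_mem_GammaSet_iff hm1 hm2] at hγ
  rcases hγ with h | ⟨-, rfl⟩ | h
  · exact h.2.1
  · exact Even.zero
  · simp only at hbd; omega

lemma resonant_sub_iff (hm1 : 0 < m1) (hm2 : 0 < m2) {γ γ' : ℤ × ℤ}
    (hγ : γ ∈ GammaSet m1 m2) (hγ' : γ' ∈ GammaSet m1 m2) :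
    Resonant m1 m2 (γ.1 - γ'.1) (γ.2 - γ'.2) ↔ γ = γ' := by
  obtain ⟨a, b⟩ := γ
  obtain ⟨a', b'⟩ := γ'
  have hm1' : (0 : ℤ) < m1 := by exact_mod_cast hm1
  have hm2' : (0 : ℤ) < m2 := by exact_mod_cast hm2
  have hB := bounds_of_mk_mem_GammaSet hm1 hm2 hγ
  have hB' := bounds_of_mk_mem_GammaSet hm1 hm2 hγ'
  rw [mk_mem_GammaSet_iff hm1 hm2] at hγ hγ'
  constructor
  · rintro ⟨p, q, hp, hq, hpq⟩
    simp only at hp hq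
    have : -1 ≤ p := by nlinarith
    have : p ≤ 1 := by nlinarith
    have : -1 ≤ q := by nlinarith
    have : q ≤ 1 := by nlinarith
    interval_cases p <;> interval_cases q <;> norm_num at hpq <;>
      rcases hγ with h | h | h <;> rcases hγ' with h' | h' | h' <;> simp only [Prod.mk.injEq] <;>
      omega
  · rintro ⟨⟩
    exact ⟨0, 0, by simp, by simp, Even.zero⟩

lemma resonant_add_iff (hm1 : 0 < m1) (hm2 : 0 < m2) {γ γ' : ℤ × ℤ}
    (hγ : γ ∈ GammaSet m1 m2) (hγ' : γ' ∈ GammaSet m1 m2) :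
    Resonant m1 m2 (γ.1 + γ'.1) (γ.2 - γ'.2) ↔ γ = γ' ∧ (γ.1 = 0 ∨ γ.1 = m1) := by
  obtain ⟨a, b⟩ := γ
  obtain ⟨a', b'⟩ := γ'
  have hm1' : (0 : ℤ) < m1 := by exact_mod_cast hm1
  have hm2' : (0 : ℤ) < m2 := by exact_mod_cast hm2
  have hB := bounds_of_mk_mem_GammaSet hm1 hm2 hγ
  have hB' := bounds_of_mk_mem_GammaSet hm1 hm2 hγ'
  rw [mk_mem_GammaSet_iff hm1 hm2] at hγ hγ'
  constructor
  · rintro ⟨p, q, hp, hq, hpq⟩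
    simp only at hp hq
    have : 0 ≤ p := by nlinarith
    have : p ≤ 2 := by nlinarith
    have : -1 ≤ q := by nlinarith
    have : q ≤ 1 := by nlinarith
    -- For p = 1, q = ±1 the two diamond inequalities add up to a contradiction with the
    -- strict upper edge of Γ(m).
    interval_cases p <;> interval_cases q <;> norm_num at hpq <;>
      rcases hγ with h | h | h <;> rcases hγ' with h' | h' | h' <;> simp only [Prod.mk.injEq] <;>
      first | omega | nlinarith
  · rintro ⟨⟨⟩, ha | ha⟩ <;> simp only at ha
    · exact ⟨0, 0, by omega, by omega, Even.zero⟩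
    · exact ⟨2, 0, by omega, by omega, by decide⟩

end GammaSet

noncomputable def chiNormSq (m1 : ℕ) (γ : ℤ × ℤ) : ℂ :=
  if γ.1 = 0 ∨ γ.1 = (m1 : ℤ) then 1 else 1 / 2

lemma mul_chiNormSq_ne_zero {m1 m2 : ℕ} (hm1 : 0 < m1) (hm2 : 0 < m2) (γ : ℤ × ℤ) :
    (m1 * m2 * chiNormSq m1 γ : ℂ) ≠ 0 := by
  have hm : (m1 * m2 : ℂ) ≠ 0 := by exact_mod_cast (mul_pos hm1 hm2).ne'
  unfold chiNormSq; split_ifs <;> simpa using hm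

section Orthogonality

variable {m1 m2 : ℕ}

lemma chi_mul_conj_chi (γ γ' : ℤ × ℤ) (k : ℕ × ℕ) :
    chi m1 m2 γ k * starRingEnd ℂ (chi m1 m2 γ' k) =
      (planeWave m1 m2 (γ.1 - γ'.1) (γ.2 - γ'.2) k
        + (-1) ^ γ'.2 * planeWave m1 m2 (γ.1 + γ'.1) (γ.2 - γ'.2) k
        + (-1) ^ γ.2 * planeWave m1 m2 (-(γ.1 + γ'.1)) (γ.2 - γ'.2) k
        + (-1) ^ γ.2 * (-1) ^ γ'.2 * planeWave m1 m2 (-(γ.1 - γ'.1)) (γ.2 - γ'.2) k) / 4 := by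
  rw [chi_eq_planeWave, conj_chi]
  have e1 : planeWave m1 m2 γ.1 γ.2 k * planeWave m1 m2 (-γ'.1) (-γ'.2) k =
      planeWave m1 m2 (γ.1 - γ'.1) (γ.2 - γ'.2) k := by rw [planeWave_mul]; ring_nf
  have e2 : planeWave m1 m2 γ.1 γ.2 k * planeWave m1 m2 γ'.1 (-γ'.2) k =
      planeWave m1 m2 (γ.1 + γ'.1) (γ.2 - γ'.2) k := by rw [planeWave_mul]; ring_nf
  have e3 : planeWave m1 m2 (-γ.1) γ.2 k * planeWave m1 m2 (-γ'.1) (-γ'.2) k =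
      planeWave m1 m2 (-(γ.1 + γ'.1)) (γ.2 - γ'.2) k := by rw [planeWave_mul]; ring_nf
  have e4 : planeWave m1 m2 (-γ.1) γ.2 k * planeWave m1 m2 γ'.1 (-γ'.2) k =
      planeWave m1 m2 (-(γ.1 - γ'.1)) (γ.2 - γ'.2) k := by rw [planeWave_mul]; ring_nf
  linear_combination (e1 + (-1) ^ γ'.2 * e2 + (-1) ^ γ.2 * e3 + (-1) ^ γ.2 * (-1) ^ γ'.2 * e4) / 4

open scoped Classical in
lemma sum_checkerboard_chi_mul_conj_chi (hm1 : m1 ≠ 0) (hm2 : m2 ≠ 0) (γ γ' : ℤ × ℤ) :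
    ∑ k ∈ checkerboard m1 m2, chi m1 m2 γ k * starRingEnd ℂ (chi m1 m2 γ' k) =
      m1 * m2 / 2 *
        ((1 + (-1) ^ γ.2 * (-1) ^ γ'.2) *
            (if Resonant m1 m2 (γ.1 - γ'.1) (γ.2 - γ'.2) then 1 else 0) +
          ((-1) ^ γ.2 + (-1) ^ γ'.2) *
            (if Resonant m1 m2 (γ.1 + γ'.1) (γ.2 - γ'.2) then 1 else 0)) := by
  simp only [chi_mul_conj_chi, ← sum_div, sum_add_distrib, ← mul_sum,
    sum_checkerboard_planeWave hm1 hm2, resonant_neg_iff]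
  split_ifs <;> ring

theorem sum_chi_mul_conj_chi (hm1 : 0 < m1) (hm2 : 0 < m2) (heven : Even m2)
    {γ γ' : ℤ × ℤ} (hγ : γ ∈ GammaSet m1 m2) (hγ' : γ' ∈ GammaSet m1 m2) :
    ∑ i ∈ indexSet m1 m2, chi m1 m2 γ i * starRingEnd ℂ (chi m1 m2 γ' i) =
      if γ = γ' then m1 * m2 * chiNormSq m1 γ else 0 := by
  have hfold : ∑ k ∈ checkerboard m1 m2, chi m1 m2 γ k * starRingEnd ℂ (chi m1 m2 γ' k) =
      2 * ∑ i ∈ indexSet m1 m2, chi m1 m2 γ i * starRingEnd ℂ (chi m1 m2 γ' i) := by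
    rw [sum_checkerboard_eq_sum_indexSet hm1.ne' heven, mul_sum]
    refine sum_congr rfl fun i hi => ?_
    have hi1 : i.1 ≤ 2 * m1 := by rw [mem_indexSet_iff] at hi; omega
    rw [chi_reflect hm1.ne' hm2.ne' _ hi1, chi_reflect hm1.ne' hm2.ne' _ hi1, two_mul]
  rw [← mul_right_inj' (two_ne_zero' ℂ), ← hfold,
    sum_checkerboard_chi_mul_conj_chi hm1.ne' hm2.ne', resonant_sub_iff hm1 hm2 hγ hγ',
    resonant_add_iff hm1 hm2 hγ hγ']
  by_cases h : γ = γ'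
  · subst h
    simp only [chiNormSq, true_and, if_true]
    split_ifs with hbd
    · rw [(even_snd_of_mem_GammaSet hm1 hm2 hγ hbd).neg_one_zpow]; ring
    · rw [← zpow_add₀ (by norm_num), (Even.add_self _).neg_one_zpow]; ring
  · simp [h]

end Orthogonality

section Counting

variable {m1 m2 : ℕ}

lemma card_GammaSet_fiber_zero (hm1 : 0 < m1) (hm2 : 0 < m2) (heven : Even m2) :
    #((GammaSet m1 m2).filter (·.1 = 0)) = m2 - 1 := by
  obtain ⟨h, rfl⟩ := heven
  rw [card_filter_fst_eq _ _ ((Icc (1 - h : ℤ) (h - 1)).image (2 * ·)),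
    card_image_of_injective _ fun x y hxy => by simpa using hxy, Int.card_Icc]
  · omega
  intro b
  rw [mem_image, mk_mem_GammaSet_iff hm1 hm2]
  constructor
  · rintro ⟨c, hc, rfl⟩
    rw [mem_Icc] at hc
    exact Or.inl ⟨rfl, ⟨c, by ring⟩, by push_cast; omega, by push_cast; omega⟩
  · rintro (⟨-, ⟨c, rfl⟩, hb1, hb2⟩ | ⟨h0, -⟩ | ⟨h0, -⟩)
    · exact ⟨c, by rw [mem_Icc]; push_cast at hb1 hb2; omega, by ring⟩
    · omega
    · omega

lemma card_GammaSet_fiber_top (hm1 : 0 < m1) (hm2 : 0 < m2) :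
    #((GammaSet m1 m2).filter (·.1 = (m1 : ℤ))) = 1 := by
  rw [card_filter_fst_eq _ _ {0}, card_singleton]
  intro b
  rw [mem_singleton, mk_mem_GammaSet_iff hm1 hm2]
  constructor
  · rintro rfl
    exact Or.inr (Or.inl ⟨rfl, rfl⟩)
  · rintro (⟨h0, -⟩ | ⟨-, rfl⟩ | ⟨-, hlt, -⟩) <;> omega

lemma card_GammaSet_fiber_of_lt {a : ℤ} (hm1 : 0 < m1) (hm2 : 0 < m2) (ha0 : 0 < a)
    (ham : a < m1) :
    (#((GammaSet m1 m2).filter (·.1 = a)) : ℤ) =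
      (m2 * (m1 - a) - 1) / m1 + m2 * (m1 - a) / m1 + 1 := by
  have hm1' : (0 : ℤ) < m1 := by exact_mod_cast hm1
  rw [card_filter_fst_eq _ _ (Icc (-(m2 * (m1 - a) / m1)) ((m2 * (m1 - a) - 1) / m1)),
    Int.card_Icc, Int.toNat_of_nonneg]
  · ring
  · have hR : 0 < (m2 : ℤ) * (m1 - a) := mul_pos (by exact_mod_cast hm2) (by omega)
    have := Int.ediv_nonneg (by omega : 0 ≤ (m2 : ℤ) * (m1 - a) - 1) hm1'.le
    have := Int.ediv_nonneg hR.le hm1'.le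
    omega
  intro b
  rw [mem_Icc, mk_mem_GammaSet_iff hm1 hm2, neg_le, Int.le_ediv_iff_mul_le hm1',
    Int.le_ediv_iff_mul_le hm1']
  constructor
  · rintro ⟨h1, h2⟩
    exact Or.inr (Or.inr ⟨ha0, ham, by linarith, by linarith⟩)
  · rintro (⟨rfl, -⟩ | ⟨rfl, -⟩ | ⟨-, -, h1, h2⟩)
    · omega
    · omega
    · constructor <;> linarith

lemma sum_card_GammaSet_fiber_Ioo (hm1 : 0 < m1) (hm2 : 0 < m2) :
    ∑ a ∈ Ioo (0 : ℤ) m1, (#((GammaSet m1 m2).filter (·.1 = a)) : ℤ) = (m1 - 1) * m2 := by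
  set g : ℤ → ℤ := fun a => (m2 * (m1 - a) - 1) / m1 + m2 * (m1 - a) / m1 + 1 with hg
  have hm1' : (0 : ℤ) < m1 := by exact_mod_cast hm1
  have hpair : ∀ a, g a + g (m1 - a) = 2 * m2 := by
    intro a
    have h1 := Int.ediv_add_ediv_of_add_add_one_eq (x := m2 * (m1 - a) - 1)
      (y := m2 * (m1 - (m1 - a))) (n := m2) hm1' (by ring)
    have h2 := Int.ediv_add_ediv_of_add_add_one_eq (x := m2 * (m1 - a))
      (y := m2 * (m1 - (m1 - a)) - 1) (n := m2) hm1' (by ring)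
    simp only [hg]
    linear_combination h1 + h2
  have hreflect : ∑ a ∈ Ioo (0 : ℤ) m1, g (m1 - a) = ∑ a ∈ Ioo (0 : ℤ) m1, g a :=
    sum_equiv (Equiv.subLeft (m1 : ℤ)) (fun a => by simp only [mem_Ioo, Equiv.subLeft_apply]; omega)
      fun _ _ => rfl
  have hsum : 2 * ∑ a ∈ Ioo (0 : ℤ) m1, g a = 2 * ((m1 - 1) * m2) := by
    rw [two_mul]
    nth_rw 2 [← hreflect]
    rw [← sum_add_distrib, sum_congr rfl fun a _ => hpair a, sum_const,
      Int.card_Ioo, nsmul_eq_mul, Int.toNat_of_nonneg (by omega)]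
    ring
  rw [sum_congr rfl fun a ha => card_GammaSet_fiber_of_lt hm1 hm2 (mem_Ioo.1 ha).1 (mem_Ioo.1 ha).2]
  exact mul_left_cancel₀ two_ne_zero hsum

theorem card_GammaSet (hm1 : 0 < m1) (hm2 : 0 < m2) (heven : Even m2) :
    #(GammaSet m1 m2) = m1 * m2 := by
  have hfib := card_eq_sum_card_fiberwise (f := Prod.fst) (t := Icc (0 : ℤ) m1)
    fun γ hγ => by
      have := bounds_of_mk_mem_GammaSet hm1 hm2 (a := γ.1) (b := γ.2) hγ
      exact mem_Icc.2 ⟨this.1, this.2.1⟩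
  rw [Icc_eq_cons_Ioc (by omega), sum_cons, Ioc_eq_cons_Ioo (by omega), sum_cons,
    card_GammaSet_fiber_zero hm1 hm2 heven, card_GammaSet_fiber_top hm1 hm2] at hfib
  zify [Nat.one_le_iff_ne_zero.2 hm2.ne'] at hfib ⊢
  rw [hfib, sum_card_GammaSet_fiber_Ioo hm1 hm2]
  ring

end Counting

section Lagrange

variable {m1 m2 : ℕ}

lemma lagrange_eq_sum (i : ℕ × ℕ) (θ φ : ℝ) :
    lagrange m1 m2 i θ φ = ∑ γ ∈ GammaSet m1 m2,
      starRingEnd ℂ (chi m1 m2 γ i) / (m1 * m2 * chiNormSq m1 γ) * Xbasis γ θ φ := by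
  rw [lagrange, mul_sum]
  refine sum_congr rfl fun γ _ => ?_
  rw [chiNormSq]
  ring

lemma Xbasis_node (γ : ℤ × ℤ) (i : ℕ × ℕ) :
    Xbasis γ (i.1 * π / m1) (i.2 * π / m2) = chi m1 m2 γ i := by
  have hcos : (γ.1 : ℝ) * (i.1 * π / m1) = γ.1 * i.1 * π / m1 := by ring
  have hexp : I * γ.2 * ((i.2 * π / m2 : ℝ) : ℂ) = I * γ.2 * i.2 * π / m2 := by push_cast; ring
  rw [Xbasis, chi, hcos, hexp]

theorem sum_chi_mul_lagrange (hm1 : 0 < m1) (hm2 : 0 < m2) (heven : Even m2) {γ : ℤ × ℤ}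
    (hγ : γ ∈ GammaSet m1 m2) (θ φ : ℝ) :
    ∑ i ∈ indexSet m1 m2, chi m1 m2 γ i * lagrange m1 m2 i θ φ = Xbasis γ θ φ := by
  have hcoeff : ∀ γ' ∈ GammaSet m1 m2, ∑ i ∈ indexSet m1 m2, chi m1 m2 γ i *
      (starRingEnd ℂ (chi m1 m2 γ' i) / (m1 * m2 * chiNormSq m1 γ') * Xbasis γ' θ φ) =
        if γ = γ' then Xbasis γ' θ φ else 0 := by
    intro γ' hγ'
    simp_rw [← mul_assoc, ← sum_mul, mul_div_assoc', ← sum_div,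
      sum_chi_mul_conj_chi hm1 hm2 heven hγ hγ']
    split_ifs with h
    · subst h
      rw [div_self (mul_chiNormSq_ne_zero hm1 hm2 γ), one_mul]
    · simp
  simp_rw [lagrange_eq_sum, mul_sum]
  rw [sum_comm, sum_congr rfl hcoeff, sum_ite_eq, if_pos hγ]

theorem sum_conj_chi_mul_chi (hm1 : 0 < m1) (hm2 : 0 < m2) (heven : Even m2) {i j : ℕ × ℕ}
    (hi : i ∈ indexSet m1 m2) (hj : j ∈ indexSet m1 m2) :
    ∑ γ ∈ GammaSet m1 m2, starRingEnd ℂ (chi m1 m2 γ j) / (m1 * m2 * chiNormSq m1 γ) *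
      chi m1 m2 γ i = if i = j then 1 else 0 := by
  let C : Matrix (GammaSet m1 m2) (indexSet m1 m2) ℂ := fun γ k => chi m1 m2 γ k
  let B : Matrix (indexSet m1 m2) (GammaSet m1 m2) ℂ := fun k γ =>
    starRingEnd ℂ (chi m1 m2 γ k) / (m1 * m2 * chiNormSq m1 γ)
  have hCB : C * B = 1 := by
    ext γ γ'
    rw [Matrix.mul_apply, Matrix.one_apply]
    simp only [C, B, mul_div_assoc']
    rw [← sum_div,
      sum_coe_sort (indexSet m1 m2) fun k => chi m1 m2 γ k * starRingEnd ℂ (chi m1 m2 γ' k),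
      sum_chi_mul_conj_chi hm1 hm2 heven γ.2 γ'.2]
    by_cases h : γ = γ'
    · rw [if_pos (congrArg Subtype.val h), if_pos h, h, div_self (mul_chiNormSq_ne_zero hm1 hm2 _)]
    · rw [if_neg (fun h' => h (Subtype.ext h')), if_neg h, zero_div]
  have hcard : Fintype.card (GammaSet m1 m2) = Fintype.card (indexSet m1 m2) := by
    simp only [Fintype.card_coe, card_GammaSet hm1 hm2 heven, card_indexSet hm1.ne' hm2.ne' heven]
  -- `C` is square, so its right inverse `B` is also a left inverse.
  have hBC := (Matrix.mul_eq_one_comm_of_equiv (Fintype.equivOfCardEq hcard)).1 hCB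
  have hji := congrFun (congrFun hBC ⟨j, hj⟩) ⟨i, hi⟩
  rw [Matrix.mul_apply, Matrix.one_apply] at hji
  rw [← sum_coe_sort (GammaSet m1 m2), hji]
  simp only [Subtype.mk.injEq, eq_comm]

theorem lagrange_node (hm1 : 0 < m1) (hm2 : 0 < m2) (heven : Even m2) {i j : ℕ × ℕ}
    (hi : i ∈ indexSet m1 m2) (hj : j ∈ indexSet m1 m2) :
    lagrange m1 m2 j (i.1 * π / m1) (i.2 * π / m2) = if i = j then 1 else 0 := by
  simp only [lagrange_eq_sum, Xbasis_node]
  exact sum_conj_chi_mul_chi hm1 hm2 heven hi hj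

theorem eq_zero_of_sum_mul_lagrange_eq_zero (hm1 : 0 < m1) (hm2 : 0 < m2) (heven : Even m2)
    {c : ℕ × ℕ → ℂ} (hc : ∀ θ φ : ℝ, ∑ i ∈ indexSet m1 m2, c i * lagrange m1 m2 i θ φ = 0)
    {i : ℕ × ℕ} (hi : i ∈ indexSet m1 m2) : c i = 0 := by
  have h := hc (i.1 * π / m1) (i.2 * π / m2)
  rw [sum_congr rfl fun j hj => by rw [lagrange_node hm1 hm2 heven hi hj]] at h
  simpa [hi] using h

end Lagrange

theorem stmt16 (m1 m2 : ℕ) (hm1 : 0 < m1) (hm2 : 0 < m2) (heven : Even m2) :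
    (∀ i ∈ indexSet m1 m2, ∀ j ∈ indexSet m1 m2,
      lagrange m1 m2 j (i.1 * π / m1) (i.2 * π / m2) =
        if i = j then 1 else 0) ∧
    (∀ c : ℕ × ℕ → ℂ,
      (∀ θ φ : ℝ, (∑ i ∈ indexSet m1 m2, c i * lagrange m1 m2 i θ φ) = 0) →
      ∀ i ∈ indexSet m1 m2, c i = 0) ∧
    (∀ γ ∈ GammaSet m1 m2, ∃ d : ℕ × ℕ → ℂ, ∀ θ φ : ℝ,
      Xbasis γ θ φ = ∑ i ∈ indexSet m1 m2, d i * lagrange m1 m2 i θ φ) :=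
  ⟨fun _ hi _ hj => lagrange_node hm1 hm2 heven hi hj,
    fun _ hc _ hi => eq_zero_of_sum_mul_lagrange_eq_zero hm1 hm2 heven hc hi,
    fun _ hγ => ⟨_, fun θ φ => (sum_chi_mul_lagrange hm1 hm2 heven hγ θ φ).symm⟩⟩
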